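/- arXiv:2407.09476 — 2 statements merged into one kernel-verified Lean document; each statement's English description precedes it below -/
import Mathlib

section
/- Let G be a finite simple graph that is 3-non-compliant. Then for any two adjacent vertices u and v of G, the number of common neighbors of u and v in G is at least 2, i.e. |N_G(u) ∩ N_G(v)| ≥ 2. -/
/-- `S` is a connected dominating set of the simple graph `G`: the subgraph of `G`
induced by `S` is connected (in particular `S` is nonempty) and every vertex
outside `S` has a neighbor in `S`. -/
def ConnDomSet {V : Type*} (G : SimpleGraph V) (S : Finset V) : Prop :=
  S.Nonempty ∧ (G.induce (↑S : Set V)).Connected ∧ ∀ v ∉ S, ∃ u ∈ S, G.Adj u v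

/-- A graph `G` is `k`-compliant if `G` or its complement has a connected dominating
set of cardinality at most `k`. -/
def Compliant {V : Type*} (G : SimpleGraph V) (k : ℕ) : Prop :=
  (∃ S : Finset V, S.card ≤ k ∧ ConnDomSet G S) ∨
    (∃ S : Finset V, S.card ≤ k ∧ ConnDomSet Gᶜ S)

/-!
Suppose `u ~ v` have at most one common neighbour. If some vertex `w` outside
`N[u] ∪ N[v]` misses every common neighbour, then `{u, v, w}` is a connected dominating
set of the complement, with hub `w`: a vertex not dominated there by `u` or `v` is a
common neighbour. Otherwise every vertex outside `N[u] ∪ N[v]` sees a common neighbour,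
which is then unique; adding it (if it exists) to `{u, v}` gives a connected dominating
set of `G` of size at most three.
-/

open Finset

namespace SimpleGraph

variable {V : Type*} {G : SimpleGraph V}

lemma induce_connected_of_forall_adj {S : Set V} {a : V} (ha : a ∈ S)
    (hub : ∀ b ∈ S, b ≠ a → G.Adj a b) : (G.induce S).Connected := by
  rw [connected_iff_exists_forall_reachable]
  refine ⟨⟨a, ha⟩, fun ⟨b, hb⟩ => ?_⟩
  by_cases hba : b = a
  · subst hba; rfl
  · exact Adj.reachable (hub b hb hba)

lemma connDomSet_of_forall_adj {S : Finset V} {a : V} (ha : a ∈ S)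
    (hub : ∀ b ∈ S, b ≠ a → G.Adj a b) (hdom : ∀ x ∉ S, ∃ y ∈ S, G.Adj y x) :
    ConnDomSet G S :=
  ⟨⟨a, ha⟩, induce_connected_of_forall_adj (by exact_mod_cast ha) (by exact_mod_cast hub),
    hdom⟩

variable [DecidableEq V]

lemma connDomSet_pair {u v : V} (huv : G.Adj u v)
    (hdom : ∀ x, x ≠ u → x ≠ v → G.Adj u x ∨ G.Adj v x) : ConnDomSet G {u, v} := by
  refine connDomSet_of_forall_adj (a := u) (by simp) ?_ fun x hx => ?_
  · simp only [mem_insert, mem_singleton]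
    rintro b (rfl | rfl) hb
    exacts [absurd rfl hb, huv]
  · simp only [mem_insert, mem_singleton, not_or] at hx
    rcases hdom x hx.1 hx.2 with h | h
    exacts [⟨u, by simp, h⟩, ⟨v, by simp, h⟩]

lemma connDomSet_triple_of_adj {u v c : V} (hcu : G.Adj c u) (hcv : G.Adj c v)
    (hdom : ∀ x, x ≠ u → x ≠ v → ¬G.Adj u x → ¬G.Adj v x → G.Adj c x) :
    ConnDomSet G {u, v, c} := by
  refine connDomSet_of_forall_adj (a := c) (by simp) ?_ fun x hx => ?_
  · simp only [mem_insert, mem_singleton]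
    rintro b (rfl | rfl | rfl) hb
    exacts [hcu, hcv, absurd rfl hb]
  · simp only [mem_insert, mem_singleton, not_or] at hx
    obtain ⟨hxu, hxv, -⟩ := hx
    by_cases hu : G.Adj u x
    · exact ⟨u, by simp, hu⟩
    by_cases hv : G.Adj v x
    · exact ⟨v, by simp, hv⟩
    exact ⟨c, by simp, hdom x hxu hxv hu hv⟩

lemma connDomSet_compl_triple {u v w : V} (hwu : w ≠ u) (hwv : w ≠ v)
    (hu : ¬G.Adj u w) (hv : ¬G.Adj v w)
    (hcommon : ∀ c, G.Adj u c → G.Adj v c → ¬G.Adj c w) :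
    ConnDomSet Gᶜ {u, v, w} := by
  refine connDomSet_of_forall_adj (a := w) (by simp) ?_ fun x hx => ?_
  · simp only [mem_insert, mem_singleton]
    rintro b (rfl | rfl | rfl) hb
    exacts [⟨hwu, fun h => hu h.symm⟩, ⟨hwv, fun h => hv h.symm⟩, absurd rfl hb]
  · simp only [mem_insert, mem_singleton, not_or] at hx
    obtain ⟨hxu, hxv, hxw⟩ := hx
    by_cases hux : G.Adj u x
    · by_cases hvx : G.Adj v x
      · exact ⟨w, by simp, fun h => hxw h.symm, fun h => hcommon x hux hvx h.symm⟩
      · exact ⟨v, by simp, fun h => hxv h.symm, hvx⟩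
    · exact ⟨u, by simp, fun h => hxu h.symm, hux⟩

end SimpleGraph

open SimpleGraph

theorem stmt1 {V : Type*} [Fintype V] [DecidableEq V] (G : SimpleGraph V)
    [DecidableRel G.Adj] (hG : ¬ Compliant G 3) (u v : V) (hadj : G.Adj u v) :
    2 ≤ (G.neighborFinset u ∩ G.neighborFinset v).card := by
  by_contra! hcard
  have common_unique : ∀ c c', G.Adj u c → G.Adj v c → G.Adj u c' → G.Adj v c' → c = c' :=
    fun c c' huc hvc huc' hvc' => card_le_one.mp (Nat.le_of_lt_succ hcard) c (by simp [huc, hvc])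
      c' (by simp [huc', hvc'])
  apply hG
  by_cases hfar : ∃ w, w ≠ u ∧ w ≠ v ∧ ¬G.Adj u w ∧ ¬G.Adj v w ∧
      ∀ c, G.Adj u c → G.Adj v c → ¬G.Adj c w
  · obtain ⟨w, hwu, hwv, hu, hv, hcommon⟩ := hfar
    exact .inr ⟨_, card_le_three, connDomSet_compl_triple hwu hwv hu hv hcommon⟩
  push Not at hfar
  by_cases hc : ∃ c, G.Adj u c ∧ G.Adj v c
  · obtain ⟨c, huc, hvc⟩ := hc
    refine .inl ⟨_, card_le_three,
      connDomSet_triple_of_adj huc.symm hvc.symm fun x hxu hxv hu hv => ?_⟩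
    obtain ⟨c', huc', hvc', hc'x⟩ := hfar x hxu hxv hu hv
    exact common_unique c' c huc' hvc' huc hvc ▸ hc'x
  · refine .inl ⟨_, card_le_two.trans (by norm_num), connDomSet_pair hadj fun x hxu hxv => ?_⟩
    by_contra! hx
    obtain ⟨c, huc, hvc, -⟩ := hfar x hxu hxv hx.1 hx.2
    exact hc ⟨c, huc, hvc⟩
end

section
/- Let n ≥ 7 and let G be a finite simple graph on n vertices such that both G and its complement are connected. Then G or its complement has a connected dominating set of cardinality at most ⌈√(2n − 4)⌉ − 1; that is, min{γ_c(G), γ_c(complement of G)} ≤ ⌈√(2n − 4)⌉ − 1. -/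
/-
Suppose `Gᶜ` has no connected dominating set of size at most `k`. For a vertex `v` and a set
`X` of fewer than `k` non-neighbours of `v`, the star `{v} ∪ X` is connected in `Gᶜ`, hence not
dominating there: some vertex is adjacent in `G` to `v` and to all of `X`. Starting from `{v}`
and repeatedly adding such a common neighbour of `v` and `k - 1` undominated vertices, `G` gets
a connected dominating set of size at most `k` as soon as `v` has at most `(k - 1)²`
non-neighbours. For `k = ⌈√(2n - 4)⌉ - 1 ≥ 3` we have `n - 1 ≤ 2 (k - 1)² + 1`, so `v` has at
most `(k - 1)²` non-neighbours in `G` or in `Gᶜ`.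
-/

open Finset SimpleGraph

section

variable {V : Type*}

lemma SimpleGraph.induce_connected_of_forall_adj_s19 {G : SimpleGraph V} {S : Set V} {v : V}
    (hv : v ∈ S) (hadj : ∀ u ∈ S, u ≠ v → G.Adj v u) : (G.induce S).Connected := by
  rw [connected_iff_exists_forall_reachable]
  refine ⟨⟨v, hv⟩, fun ⟨u, hu⟩ => ?_⟩
  obtain rfl | hne := eq_or_ne u v
  · rfl
  · exact Adj.reachable (hadj u hu hne)

lemma exists_forall_not_adj_of_not_connDomSet {G : SimpleGraph V} {S : Finset V}
    (hS : ¬ ConnDomSet G S) (hne : S.Nonempty) (hconn : (G.induce (S : Set V)).Connected) :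
    ∃ w ∉ S, ∀ u ∈ S, ¬ G.Adj u w := by
  simpa [ConnDomSet, hne, hconn] using hS

lemma exists_adj_forall_adj_of_forall_not_connDomSet_compl {G : SimpleGraph V} {k : ℕ}
    (hno : ∀ S : Finset V, S.card ≤ k → ¬ ConnDomSet Gᶜ S) {v : V} {X : Finset V}
    (hX : ∀ x ∈ X, Gᶜ.Adj v x) (hcard : X.card < k) :
    ∃ y, G.Adj v y ∧ ∀ x ∈ X, G.Adj y x := by
  classical
  have hstar : ∀ u ∈ insert v X, u ≠ v → Gᶜ.Adj v u := fun u hu hne =>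
    hX u ((mem_insert.mp hu).resolve_left hne)
  obtain ⟨w, hw, hnadj⟩ := exists_forall_not_adj_of_not_connDomSet
    (hno _ ((card_insert_le v X).trans hcard)) (insert_nonempty v X)
    (induce_connected_of_forall_adj_s19 (mem_insert_self v X) hstar)
  have hadj : ∀ u ∈ insert v X, G.Adj u w := fun u hu => by
    simpa [ne_of_mem_of_not_mem hu hw] using hnadj u hu
  exact ⟨w, hadj v (mem_insert_self v X), fun x hx => (hadj x (mem_insert_of_mem hx)).symm⟩

lemma compliant_compl {G : SimpleGraph V} {k : ℕ} : Compliant Gᶜ k ↔ Compliant G k := by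
  rw [Compliant, Compliant, compl_compl, or_comm]

variable [Fintype V]

open Classical in
noncomputable def undominated (G : SimpleGraph V) (S : Finset V) : Finset V :=
  {u | u ∉ S ∧ ∀ s ∈ S, ¬ G.Adj s u}

lemma mem_undominated {G : SimpleGraph V} {S : Finset V} {u : V} :
    u ∈ undominated G S ↔ u ∉ S ∧ ∀ s ∈ S, ¬ G.Adj s u := by
  simp [undominated]

lemma ConnDomSet.of_undominated_eq_empty {G : SimpleGraph V} {S : Finset V}
    (hne : S.Nonempty) (hconn : (G.induce (S : Set V)).Connected)
    (hU : undominated G S = ∅) : ConnDomSet G S := by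
  refine ⟨hne, hconn, fun w hw => ?_⟩
  have : w ∉ undominated G S := by simp [hU]
  simpa [mem_undominated, hw] using this

lemma undominated_insert_subset_sdiff [DecidableEq V] {G : SimpleGraph V} {S X : Finset V}
    {y : V} (hy : ∀ x ∈ X, G.Adj y x) : undominated G (insert y S) ⊆ undominated G S \ X := by
  intro u hu
  simp only [mem_undominated, mem_insert, not_or, forall_eq_or_imp] at hu
  exact mem_sdiff.mpr ⟨mem_undominated.mpr ⟨hu.1.2, hu.2.2⟩, fun hx => hu.2.1 (hy u hx)⟩

lemma undominated_singleton [DecidableEq V] (G : SimpleGraph V) [DecidableRel G.Adj] (v : V) :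
    undominated G {v} = Gᶜ.neighborFinset v := by
  ext u
  simp [mem_undominated, compl_adj, eq_comm]

lemma card_undominated_singleton_add_compl [DecidableEq V] (G : SimpleGraph V)
    [DecidableRel G.Adj] (v : V) :
    (undominated G {v}).card + (undominated Gᶜ {v}).card = Fintype.card V - 1 := by
  rw [undominated_singleton, undominated_singleton]
  simp only [card_neighborFinset_eq_degree, degree_compl]
  have := G.degree_lt_card_verts v
  omega

lemma exists_connDomSet_card_le_add {G : SimpleGraph V} {v : V} {m : ℕ}
    (hcommon : ∀ X : Finset V, (∀ x ∈ X, Gᶜ.Adj v x) → X.card ≤ m →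
      ∃ y, G.Adj v y ∧ ∀ x ∈ X, G.Adj y x)
    (r : ℕ) (S : Finset V) (hv : v ∈ S) (hS : ∀ u ∈ S, u ≠ v → G.Adj v u)
    (hU : (undominated G S).card ≤ r * m) :
    ∃ T : Finset V, T.card ≤ S.card + r ∧ ConnDomSet G T := by
  classical
  induction r generalizing S with
  | zero =>
    have hU0 : undominated G S = ∅ := card_eq_zero.mp (by simpa using hU)
    exact ⟨S, by simp, .of_undominated_eq_empty ⟨v, hv⟩ (induce_connected_of_forall_adj_s19 hv hS) hU0⟩
  | succ r ih =>
    set U := undominated G S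
    obtain ⟨X, hXU, hXcard⟩ := exists_subset_card_eq (min_le_right m U.card)
    have hXv : ∀ x ∈ X, Gᶜ.Adj v x := fun x hx => by
      obtain ⟨hxS, hSx⟩ := mem_undominated.mp (hXU hx)
      exact (compl_adj G v x).mpr ⟨ne_of_mem_of_not_mem hv hxS, hSx v hv⟩
    obtain ⟨y, hvy, hyX⟩ := hcommon X hXv (hXcard ▸ min_le_left m U.card)
    have hU' : (undominated G (insert y S)).card ≤ r * m := calc
      _ ≤ (U \ X).card := card_le_card (undominated_insert_subset_sdiff hyX)
      _ = U.card - min m U.card := by rw [card_sdiff_of_subset hXU, hXcard]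
      _ ≤ r * m := by rw [add_one_mul] at hU; omega
    have hyS : ∀ u ∈ insert y S, u ≠ v → G.Adj v u := fun u hu hne => by
      rcases mem_insert.mp hu with rfl | hu
      exacts [hvy, hS u hu hne]
    obtain ⟨T, hT, hTd⟩ := ih (insert y S) (mem_insert_of_mem hv) hyS hU'
    exact ⟨T, by grind [card_insert_le], hTd⟩

lemma Compliant.of_card_undominated_singleton_le {G : SimpleGraph V} {k : ℕ} (hk : 0 < k)
    {v : V} (hv : (undominated G {v}).card ≤ (k - 1) ^ 2) : Compliant G k := by
  refine or_iff_not_imp_right.mpr fun hno => ?_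
  simp only [not_exists, not_and] at hno
  obtain ⟨T, hT, hTd⟩ := exists_connDomSet_card_le_add (m := k - 1)
    (fun X hX hXk => exists_adj_forall_adj_of_forall_not_connDomSet_compl hno hX (by omega))
    (k - 1) {v} (mem_singleton_self v) (fun u hu hne => absurd (mem_singleton.mp hu) hne)
    (by rwa [sq] at hv)
  exact ⟨T, by simpa [Nat.add_sub_cancel' hk] using hT, hTd⟩

lemma Compliant.of_card_le (G : SimpleGraph V) {k : ℕ} (hk : 0 < k)
    (hV : 0 < Fintype.card V) (hcard : Fintype.card V ≤ 2 * (k - 1) ^ 2 + 2) :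
    Compliant G k := by
  classical
  obtain ⟨v⟩ := Fintype.card_pos_iff.mp hV
  have hsum := card_undominated_singleton_add_compl G v
  rcases le_or_gt (undominated G {v}).card ((k - 1) ^ 2) with hle | hgt
  · exact .of_card_undominated_singleton_le hk hle
  · exact compliant_compl.mp (.of_card_undominated_singleton_le (v := v) hk (by omega))

end

lemma exists_nat_eq_ceil_sqrt_sub_one {n : ℕ} (hn : 7 ≤ n) :
    ∃ k : ℕ, (k : ℤ) = ⌈√(2 * (n : ℝ) - 4)⌉ - 1 ∧ 3 ≤ k ∧ n ≤ 2 * (k - 1) ^ 2 + 2 := by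
  set c := ⌈√(2 * (n : ℝ) - 4)⌉
  have hn' : (7 : ℝ) ≤ n := by exact_mod_cast hn
  have hc : 3 < c := Int.lt_ceil.mpr <| (Real.lt_sqrt (by norm_num)).mpr (by push_cast; linarith)
  have hsq : 2 * (n : ℤ) - 4 ≤ c ^ 2 := (Int.cast_le (R := ℝ)).mp <| by
    push_cast; exact (Real.sqrt_le_iff.mp (Int.le_ceil _)).2
  refine ⟨(c - 1).toNat, by omega, by omega, ?_⟩
  zify [show 1 ≤ (c - 1).toNat by omega]
  rw [Int.toNat_of_nonneg (by omega)]
  nlinarith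

theorem stmt19_general (n : ℕ) (hn : 7 ≤ n) {V : Type*} [Fintype V]
    (G : SimpleGraph V) (hV : Fintype.card V = n) :
    (∃ S : Finset V, ConnDomSet G S ∧
        (S.card : ℤ) ≤ ⌈Real.sqrt (2 * (n : ℝ) - 4)⌉ - 1) ∨
    (∃ S : Finset V, ConnDomSet Gᶜ S ∧
        (S.card : ℤ) ≤ ⌈Real.sqrt (2 * (n : ℝ) - 4)⌉ - 1) := by
  obtain ⟨k, hkc, hk, hkn⟩ := exists_nat_eq_ceil_sqrt_sub_one hn
  rcases Compliant.of_card_le G (by omega) (by omega) (hV ▸ hkn) with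
    ⟨S, hSk, hS⟩ | ⟨S, hSk, hS⟩
  · exact Or.inl ⟨S, hS, by omega⟩
  · exact Or.inr ⟨S, hS, by omega⟩

theorem stmt19 (n : ℕ) (hn : 7 ≤ n) {V : Type*} [Fintype V]
    (G : SimpleGraph V) (hV : Fintype.card V = n)
    (hG : G.Connected) (hGc : Gᶜ.Connected) :
    (∃ S : Finset V, ConnDomSet G S ∧
        (S.card : ℤ) ≤ ⌈Real.sqrt (2 * (n : ℝ) - 4)⌉ - 1) ∨
    (∃ S : Finset V, ConnDomSet Gᶜ S ∧
        (S.card : ℤ) ≤ ⌈Real.sqrt (2 * (n : ℝ) - 4)⌉ - 1) :=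
  stmt19_general n hn G hV
end
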